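/- The map f(z,w) = (ψ₁(z₁),…,ψ_r(z_r), Ψ(z,w)) with ψ_j(z_j) = √μ(z_j, z_j²/√2, …, z_j^k/√k, …) and Ψ(z,w) having components (1/√a)·√(C(μa+k₁−1,k₁)⋯C(μa+k_r−1,k_r))·z₁^{k₁}⋯z_r^{k_r}w^a over all multi-indices k ∈ ℕ^r and integers a ≥ 1, satisfies ∑_j |f_j(z,w)|² = −log(∏_{j=1}^r(1−|z_j|²)^μ − |w|²) for all (z,w) ∈ M_{Δ^r}(μ); in particular f(z,w) ∈ ℓ²(ℂ). -/

import Mathlib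

open BigOperators

/-- Generalized binomial coefficient C(s+k-1, k) = s(s+1)⋯(s+k-1)/k!. -/
noncomputable def genBinom (s : ℝ) (k : ℕ) : ℝ :=
  (∏ i ∈ Finset.range k, (s + i)) / (Nat.factorial k)

lemma genBinom_zero (s : ℝ) : genBinom s 0 = 1 := by simp [genBinom]

lemma genBinom_succ (s : ℝ) (k : ℕ) :
    genBinom s (k + 1) = genBinom s k * (s + k) / (k + 1) := by
  have hk : ((Nat.factorial k : ℝ)) ≠ 0 := Nat.cast_ne_zero.2 (Nat.factorial_ne_zero k)
  have hk1 : ((k : ℝ) + 1) ≠ 0 := by positivity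
  simp only [genBinom, Finset.prod_range_succ, Nat.factorial_succ, Nat.cast_mul,
    Nat.cast_add, Nat.cast_one]
  rw [div_mul_eq_mul_div, div_div, mul_comm ((k:ℝ)+1) _]

lemma genBinom_pos {s : ℝ} (hs : 0 < s) (k : ℕ) : 0 < genBinom s k := by
  apply div_pos
  · exact Finset.prod_pos fun i _ => by positivity
  · exact_mod_cast Nat.factorial_pos k

lemma summable_mul_genBinom {s : ℝ} (hs : 0 < s) {x : ℝ} (hx : |x| < 1) :
    Summable (fun k : ℕ => ((k : ℝ) + 1) * genBinom s k * x ^ k) := by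
  rcases eq_or_ne x 0 with rfl | hx0
  · apply summable_of_ne_finset_zero (s := {0})
    intro k hk
    have : k ≠ 0 := by simpa using hk
    simp [zero_pow this]
  · apply summable_of_ratio_test_tendsto_lt_one hx
    · filter_upwards with k
      have := genBinom_pos hs k
      positivity
    · have h1 : Filter.Tendsto (fun k : ℕ => ((k : ℝ) + 2) / (k + 1)) Filter.atTop (nhds 1) := by
        have h := tendsto_one_div_add_atTop_nhds_zero_nat.const_add (1 : ℝ)
        convert h using 2 with k
        · have hk1 : ((k : ℝ) + 1) ≠ 0 := by positivity
          field_simp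
          ring
        · norm_num
      have h2 : Filter.Tendsto (fun k : ℕ => (s + (k : ℝ)) / (k + 1)) Filter.atTop (nhds 1) := by
        have h := (tendsto_one_div_add_atTop_nhds_zero_nat.const_mul (s - 1)).const_add 1
        convert h using 2 with k
        · have hk1 : ((k : ℝ) + 1) ≠ 0 := by positivity
          field_simp
          ring
        · norm_num
      have key : Filter.Tendsto
          (fun k : ℕ => ((k : ℝ) + 2) / (k + 1) * ((s + k) / (k + 1)) * |x|)
          Filter.atTop (nhds (1 * 1 * |x|)) := (h1.mul h2).mul_const _
      rw [one_mul, one_mul] at key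
      apply key.congr'
      filter_upwards with k
      have hbk := genBinom_pos hs k
      have hk1 : (0:ℝ) < (k : ℝ) + 1 := by positivity
      have hxk : (0:ℝ) < |x| ^ k := pow_pos (abs_pos.2 hx0) k
      have hxx : (0:ℝ) < |x| := abs_pos.2 hx0
      rw [genBinom_succ]
      push_cast
      simp only [Real.norm_eq_abs, abs_mul, abs_div, abs_pow]
      rw [abs_of_pos hbk, abs_of_pos (by positivity : (0:ℝ) < (k:ℝ)+1+1),
        abs_of_pos hk1, abs_of_pos (by positivity : (0:ℝ) < s + k), pow_succ]
      field_simp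
      ring

lemma hasSum_congr' {ι α : Type*} [AddCommMonoid α] [TopologicalSpace α] {f g : ι → α} {a : α}
    (h : HasSum f a) (he : ∀ n, g n = f n) : HasSum g a := by
  rw [show g = f from funext he]; exact h

lemma summable_genBinom {s : ℝ} (hs : 0 < s) {x : ℝ} (hx : |x| < 1) :
    Summable (fun k : ℕ => genBinom s k * x ^ k) := by
  have hax : |(|x|)| < 1 := by rwa [abs_abs]
  refine Summable.of_norm_bounded (summable_mul_genBinom hs hax) fun k => ?_
  have hb := genBinom_pos hs k
  have h1 : ‖genBinom s k * x ^ k‖ = genBinom s k * |x| ^ k := by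
    rw [Real.norm_eq_abs, abs_mul, abs_of_pos hb, abs_pow]
  rw [h1]
  have hk0 : (0:ℝ) ≤ (k : ℝ) := Nat.cast_nonneg k
  nlinarith [mul_nonneg hb.le (pow_nonneg (abs_nonneg x) k)]

lemma summable_k_genBinom {s : ℝ} (hs : 0 < s) {x : ℝ} (hx : |x| < 1) :
    Summable (fun k : ℕ => (k : ℝ) * genBinom s k * x ^ k) := by
  have hax : |(|x|)| < 1 := by rwa [abs_abs]
  refine Summable.of_norm_bounded (summable_mul_genBinom hs hax) fun k => ?_
  have hb := genBinom_pos hs k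
  have h1 : ‖(k : ℝ) * genBinom s k * x ^ k‖ = (k : ℝ) * genBinom s k * |x| ^ k := by
    rw [Real.norm_eq_abs, abs_mul, abs_mul, abs_of_pos hb, abs_pow,
      abs_of_nonneg (Nat.cast_nonneg k)]
  rw [h1]
  nlinarith [pow_nonneg (abs_nonneg x) k, mul_pos hb (pow_pos (lt_of_le_of_lt (abs_nonneg x) hx) k),
    mul_nonneg hb.le (pow_nonneg (abs_nonneg x) k)]

lemma summable_deriv_genBinom {s : ℝ} (hs : 0 < s) {x : ℝ} (hx : |x| < 1) :
    Summable (fun k : ℕ => genBinom s k * ((k : ℝ) * x ^ (k - 1))) := by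
  rcases eq_or_ne x 0 with rfl | hx0
  · apply summable_of_ne_finset_zero (s := {0, 1})
    intro k hk
    simp only [Finset.mem_insert, Finset.mem_singleton] at hk
    push_neg at hk
    have h1 : k - 1 ≠ 0 := by omega
    simp [zero_pow h1]
  · refine ((summable_k_genBinom hs hx).mul_right x⁻¹).congr fun k => ?_
    cases k with
    | zero => simp
    | succ n =>
      simp only [Nat.add_sub_cancel]
      push_cast
      field_simp
      ring

lemma hasDerivAt_genBinom_tsum {s : ℝ} (hs : 0 < s) {y : ℝ} (hy : |y| < 1) :
    HasDerivAt (fun u : ℝ => ∑' k : ℕ, genBinom s k * u ^ k)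
      (∑' k : ℕ, genBinom s k * ((k : ℝ) * y ^ (k - 1))) y := by
  set ρ : ℝ := (|y| + 1) / 2 with hρdef
  have hρ0 : 0 < ρ := by positivity
  have hyρ : |y| < ρ := by rw [hρdef]; linarith
  have hρ1 : ρ < 1 := by rw [hρdef]; linarith
  have hρa : |ρ| < 1 := by rwa [abs_of_pos hρ0]
  refine hasDerivAt_tsum_of_isPreconnected
    (u := fun k : ℕ => genBinom s k * ((k : ℝ) * ρ ^ (k - 1)))
    (summable_deriv_genBinom hs hρa) isOpen_Ioo
    ((convex_Ioo (-ρ) ρ).isPreconnected)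
    (fun k u _ => (hasDerivAt_pow k u).const_mul (genBinom s k))
    (fun k u hu => ?_) (Set.mem_Ioo.2 ⟨by linarith, hρ0⟩)
    ?_ (Set.mem_Ioo.2 ⟨neg_lt_of_abs_lt hyρ, lt_of_abs_lt hyρ⟩)
  · have hb := genBinom_pos hs k
    have hu' : |u| ≤ ρ := by
      rw [abs_le]
      exact ⟨(Set.mem_Ioo.1 hu).1.le, (Set.mem_Ioo.1 hu).2.le⟩
    have : ‖genBinom s k * ((k : ℝ) * u ^ (k - 1))‖
        = genBinom s k * ((k : ℝ) * |u| ^ (k - 1)) := by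
      rw [Real.norm_eq_abs, abs_mul, abs_mul, abs_of_pos hb, abs_pow,
        abs_of_nonneg (Nat.cast_nonneg k)]
    rw [this]
    have hpow : |u| ^ (k - 1) ≤ ρ ^ (k - 1) := pow_le_pow_left₀ (abs_nonneg u) hu' _
    have hk0 : (0:ℝ) ≤ (k : ℝ) := Nat.cast_nonneg k
    exact mul_le_mul_of_nonneg_left (mul_le_mul_of_nonneg_left hpow hk0) hb.le
  · apply summable_of_ne_finset_zero (s := {0})
    intro k hk
    have : k ≠ 0 := by simpa using hk
    simp [zero_pow this]

lemma key_identity {s : ℝ} (hs : 0 < s) {y : ℝ} (hy : |y| < 1) :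
    (1 - y) * ∑' k : ℕ, genBinom s k * ((k : ℝ) * y ^ (k - 1))
      = s * ∑' k : ℕ, genBinom s k * y ^ k := by
  have SA := summable_genBinom hs hy
  have SB := summable_k_genBinom hs hy
  have SD := summable_deriv_genBinom hs hy
  set D := ∑' k : ℕ, genBinom s k * ((k : ℝ) * y ^ (k - 1)) with hD
  set A := ∑' k : ℕ, genBinom s k * y ^ k with hA
  set B := ∑' k : ℕ, (k : ℝ) * genBinom s k * y ^ k with hB
  have h1 : HasSum (fun n : ℕ => genBinom s (n + 1) * (((n : ℕ) + 1 : ℝ) * y ^ n)) (D - 0) := by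
    have := (hasSum_nat_add_iff' (f := fun k : ℕ => genBinom s k * ((k : ℝ) * y ^ (k - 1))) 1).2
      SD.hasSum
    simpa using this
  have h2 : HasSum (fun n : ℕ => (s + n) * genBinom s n * y ^ n) D := by
    rw [sub_zero] at h1
    refine hasSum_congr' h1 fun n => ?_
    rw [genBinom_succ]
    have hn1 : ((n : ℝ) + 1) ≠ 0 := by positivity
    field_simp
  have h3 : HasSum (fun n : ℕ => (s + n) * genBinom s n * y ^ n) (s * A + B) := by
    refine hasSum_congr' ((SA.hasSum.mul_left s).add SB.hasSum) fun n => ?_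
    ring
  have hDB : D = s * A + B := h2.unique h3
  have h4 : HasSum (fun k : ℕ => (k : ℝ) * genBinom s k * y ^ k) (y * D) := by
    refine hasSum_congr' (SD.hasSum.mul_left y) fun k => ?_
    cases k with
    | zero => simp
    | succ n =>
      simp only [Nat.add_sub_cancel]
      push_cast
      ring
  have hBD : B = y * D := (SB.hasSum.unique h4)
  rw [hBD] at hDB
  linarith [hDB]

lemma hasSum_zero_pow (s : ℝ) : HasSum (fun k : ℕ => genBinom s k * (0:ℝ) ^ k) 1 := by
  have h := hasSum_single (f := fun k : ℕ => genBinom s k * (0:ℝ) ^ k) 0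
    (fun b hb => by simp [zero_pow hb])
  simpa [genBinom_zero] using h

lemma hasSum_genBinom (s : ℝ) (hs : 0 < s) {x : ℝ} (hx0 : 0 ≤ x) (hx1 : x < 1) :
    HasSum (fun k : ℕ => genBinom s k * x ^ k) ((1 - x) ^ (-s) : ℝ) := by
  rcases eq_or_lt_of_le hx0 with rfl | hxpos
  · simpa [Real.one_rpow] using hasSum_zero_pow s
  have hax : |x| < 1 := by rwa [abs_of_pos hxpos]
  have SA := summable_genBinom hs hax
  set F : ℝ → ℝ := fun u => ∑' k : ℕ, genBinom s k * u ^ k with hF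
  -- derivative of g := F u * (1-u)^s is zero on [0, x]
  have hderiv : ∀ y ∈ Set.Icc (0:ℝ) x, HasDerivAt (fun u => F u * (1 - u) ^ s) 0 y := by
    intro y hy
    obtain ⟨hy0, hyx⟩ := hy
    have hy1 : y < 1 := lt_of_le_of_lt hyx hx1
    have hay : |y| < 1 := by rw [abs_of_nonneg hy0]; exact hy1
    have h1y : (0:ℝ) < 1 - y := by linarith
    have hFd := hasDerivAt_genBinom_tsum hs hay
    have hinner : HasDerivAt (fun u : ℝ => 1 - u) (-1) y := (hasDerivAt_id y).const_sub 1
    have hrpow : HasDerivAt (fun u : ℝ => (1 - u) ^ s) (s * (1 - y) ^ (s - 1) * (-1)) y := by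
      have h2 := Real.hasDerivAt_rpow_const (x := 1 - y) (p := s) (Or.inl (ne_of_gt h1y))
      exact h2.comp y hinner
    have := hFd.mul hrpow
    convert this using 1
    case e'_4 => rfl
    case e'_5 => rfl
    case e'_8 => rfl
    set D := ∑' k : ℕ, genBinom s k * ((k : ℝ) * y ^ (k - 1)) with hD
    have hkey := key_identity hs hay
    have hsplit : (1 - y) ^ s = (1 - y) ^ (s - 1) * (1 - y) := by
      have h := Real.rpow_add h1y (s - 1) 1
      rw [sub_add_cancel, Real.rpow_one] at h
      exact h
    rw [hsplit]
    have : D * ((1 - y) ^ (s - 1) * (1 - y)) = ((1 - y) * D) * (1 - y) ^ (s - 1) := by ring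
    rw [this, hkey]
    ring
  have hcont : ContinuousOn (fun u => F u * (1 - u) ^ s) (Set.Icc 0 x) := fun y hy =>
    (hderiv y hy).continuousAt.continuousWithinAt
  have hconst := constant_of_has_deriv_right_zero hcont
    (fun y hy => (hderiv y (Set.mem_Icc.2 ⟨hy.1, hy.2.le⟩)).hasDerivWithinAt)
  have hgx : F x * (1 - x) ^ s = F 0 * (1 - 0) ^ s :=
    hconst x (Set.mem_Icc.2 ⟨hx0, le_refl x⟩)
  have hF0 : F 0 = 1 := (hasSum_zero_pow s).tsum_eq
  rw [hF0, one_mul, sub_zero, Real.one_rpow] at hgx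
  have h1x : (0:ℝ) < 1 - x := by linarith
  have hFx : F x = (1 - x) ^ (-s) := by
    rw [Real.rpow_neg h1x.le]
    exact eq_inv_of_mul_eq_one_left hgx
  rw [← hFx]
  exact SA.hasSum

set_option maxHeartbeats 1000000 in
lemma hasSum_pi_prod : ∀ (n : ℕ) (f : Fin n → ℕ → ℝ), (∀ j k, 0 ≤ f j k) →
    ∀ (S : Fin n → ℝ), (∀ j, HasSum (f j) (S j)) →
    HasSum (fun k : Fin n → ℕ => ∏ j, f j (k j)) (∏ j, S j) := by
  intro n
  induction n with
  | zero =>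
    intro f _ S _
    have h := hasSum_single (f := fun k : Fin 0 → ℕ => ∏ j, f j (k j)) (fun _ => 0)
      (fun b hb => absurd (Subsingleton.elim b _) hb)
    simpa using h
  | succ n ih =>
    intro f hf0 S hS
    have ihr := ih (fun j => f (Fin.succ j)) (fun j k => hf0 _ _) (fun j => S (Fin.succ j))
      (fun j => hS _)
    have h1 : 0 ≤ f 0 := fun k => hf0 0 k
    have h2 : 0 ≤ fun p : Fin n → ℕ => ∏ j, f (Fin.succ j) (p j) :=
      fun k => Finset.prod_nonneg fun j _ => hf0 _ _
    have hsummable : Summable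
        (fun p : ℕ × (Fin n → ℕ) => f 0 p.1 * ∏ j, f (Fin.succ j) (p.2 j)) :=
      Summable.mul_of_nonneg (f := f 0)
        (g := fun p : Fin n → ℕ => ∏ j, f (Fin.succ j) (p j))
        (hS 0).summable ihr.summable h1 h2
    have hmul : HasSum (fun p : ℕ × (Fin n → ℕ) => f 0 p.1 * ∏ j, f (Fin.succ j) (p.2 j))
        (S 0 * ∏ j, S (Fin.succ j)) :=
      HasSum.mul (f := f 0) (g := fun p : Fin n → ℕ => ∏ j, f (Fin.succ j) (p j))
        (hS 0) ihr hsummable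
    rw [Fin.prod_univ_succ]
    refine (Equiv.hasSum_iff (Fin.consEquiv (fun _ : Fin (n+1) => ℕ))).1 ?_
    refine hasSum_congr' hmul fun p => ?_
    simp [Fin.prod_univ_succ, Fin.consEquiv]

lemma main_aux (r : ℕ) (μ : ℝ) (hμ : 0 < μ) (x : Fin r → ℝ) (t : ℝ)
    (hx0 : ∀ j, 0 ≤ x j) (hx1 : ∀ j, x j < 1) (ht0 : 0 ≤ t)
    (htP : t < ∏ j, (1 - x j) ^ μ) :
    Summable (fun p : (Fin r → ℕ) × ℕ =>
      (1 / (p.2 + 1 : ℝ)) * (∏ j, genBinom (μ * (p.2 + 1)) (p.1 j)) *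
        (∏ j, (x j) ^ (p.1 j)) * t ^ (p.2 + 1)) ∧
    μ * ∑ j, ∑' k : ℕ, (x j) ^ (k + 1) / (k + 1)
      + ∑' p : (Fin r → ℕ) × ℕ,
          (1 / (p.2 + 1 : ℝ)) * (∏ j, genBinom (μ * (p.2 + 1)) (p.1 j)) *
            (∏ j, (x j) ^ (p.1 j)) * t ^ (p.2 + 1)
      = -Real.log ((∏ j, (1 - x j) ^ μ) - t) := by
  set P : ℝ := ∏ j, (1 - x j) ^ μ with hPdef
  have hxj1 : ∀ j, (0:ℝ) < 1 - x j := fun j => by linarith [hx1 j]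
  have hPj : ∀ j, 0 < (1 - x j) ^ μ := fun j => Real.rpow_pos_of_pos (hxj1 j) μ
  have hP : 0 < P := Finset.prod_pos fun j _ => hPj j
  set q : ℝ := t / P with hqdef
  have hq0 : 0 ≤ q := div_nonneg ht0 hP.le
  have hq1 : q < 1 := (div_lt_one hP).2 htP
  set T : (Fin r → ℕ) × ℕ → ℝ := fun p =>
    (1 / (p.2 + 1 : ℝ)) * (∏ j, genBinom (μ * (p.2 + 1)) (p.1 j)) *
      (∏ j, (x j) ^ (p.1 j)) * t ^ (p.2 + 1) with hTdef
  have hsa : ∀ a : ℕ, (0:ℝ) < μ * ((a:ℝ) + 1) := fun a => by positivity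
  have inner : ∀ a : ℕ, HasSum
      (fun k : Fin r → ℕ => ∏ j, (genBinom (μ * ((a:ℝ)+1)) (k j) * x j ^ (k j)))
      (∏ j, (1 - x j) ^ (-(μ * ((a:ℝ)+1)))) := fun a =>
    hasSum_pi_prod r (fun j k => genBinom (μ * ((a:ℝ)+1)) k * x j ^ k)
      (fun j k => mul_nonneg (genBinom_pos (hsa a) k).le (pow_nonneg (hx0 j) k))
      (fun j => (1 - x j) ^ (-(μ * ((a:ℝ)+1))))
      (fun j => hasSum_genBinom _ (hsa a) (hx0 j) (hx1 j))
  have hval : ∀ a : ℕ, (∏ j, (1 - x j) ^ (-(μ * ((a:ℝ)+1)))) = (P ^ (a+1))⁻¹ := by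
    intro a
    have hj : ∀ j, (1 - x j) ^ (-(μ * ((a:ℝ)+1))) = (((1 - x j) ^ μ) ^ (a+1 : ℕ))⁻¹ := by
      intro j
      rw [show -(μ * ((a:ℝ)+1)) = μ * (-((a:ℝ)+1)) by ring,
        Real.rpow_mul (hxj1 j).le,
        Real.rpow_neg (Real.rpow_nonneg (hxj1 j).le μ),
        ← Real.rpow_natCast ((1 - x j) ^ μ) (a+1)]
      norm_num
    rw [Finset.prod_congr rfl (fun j _ => hj j), Finset.prod_inv_distrib, Finset.prod_pow]
  have fiber : ∀ a : ℕ, HasSum (fun k : Fin r → ℕ => T (k, a))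
      ((1 / ((a:ℝ)+1)) * q ^ (a+1)) := by
    intro a
    have h := (inner a).mul_left ((1 / ((a:ℝ)+1)) * t ^ (a+1))
    have h2 : (1 / ((a:ℝ)+1)) * t ^ (a+1) * (∏ j, (1 - x j) ^ (-(μ * ((a:ℝ)+1))))
        = (1/((a:ℝ)+1)) * q ^ (a+1) := by
      rw [hval a, hqdef, div_pow]
      field_simp
    rw [← h2]
    refine hasSum_congr' h fun k => ?_
    simp only [hTdef]
    rw [Finset.prod_mul_distrib]
    ring
  have hTnn : ∀ p, 0 ≤ T p := by
    intro p
    have h1 : (0:ℝ) ≤ ∏ j, genBinom (μ * ((p.2:ℝ) + 1)) (p.1 j) :=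
      Finset.prod_nonneg fun j _ => (genBinom_pos (hsa p.2) (p.1 j)).le
    have h2 : (0:ℝ) ≤ ∏ j, (x j) ^ (p.1 j) :=
      Finset.prod_nonneg fun j _ => pow_nonneg (hx0 j) _
    have h3 : (0:ℝ) ≤ t ^ (p.2+1) := pow_nonneg ht0 _
    have h4 : (0:ℝ) ≤ 1 / ((p.2:ℝ)+1) := by positivity
    simp only [hTdef]
    positivity
  have houter : HasSum (fun a : ℕ => (1/((a:ℝ)+1)) * q ^ (a+1)) (-Real.log (1 - q)) := by
    refine hasSum_congr'
      (Real.hasSum_pow_div_log_of_abs_lt_one (x := q) (by rwa [abs_of_nonneg hq0])) fun n => ?_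
    rw [one_div]
    ring
  have hsumm' : Summable (fun p : ℕ × (Fin r → ℕ) => T (p.2, p.1)) := by
    refine (summable_prod_of_nonneg fun p => hTnn _).2 ⟨fun a => (fiber a).summable, ?_⟩
    have he : (fun a : ℕ => ∑' k : Fin r → ℕ, T (k, a))
        = fun a : ℕ => (1/((a:ℝ)+1)) * q ^ (a+1) := funext fun a => (fiber a).tsum_eq
    exact he ▸ houter.summable
  have hsummT : Summable T := hsumm'.prod_symm
  have htsum : ∑' p : (Fin r → ℕ) × ℕ, T p = -Real.log (1 - q) := by
    calc ∑' p : (Fin r → ℕ) × ℕ, T p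
        = ∑' c : ℕ × (Fin r → ℕ), T ((Equiv.prodComm ℕ (Fin r → ℕ)) c) := ((Equiv.prodComm ℕ (Fin r → ℕ)).tsum_eq T).symm
      _ = ∑' (a : ℕ) (k : Fin r → ℕ), T ((Equiv.prodComm ℕ (Fin r → ℕ)) (a, k)) :=
          Summable.tsum_prod' (by exact hsumm') (fun a => by exact (fiber a).summable)
      _ = ∑' a : ℕ, (1/((a:ℝ)+1)) * q ^ (a+1) :=
          tsum_congr fun a => by exact (fiber a).tsum_eq
      _ = -Real.log (1 - q) := houter.tsum_eq
  have hlog1 : ∀ j, ∑' k : ℕ, (x j) ^ (k + 1) / ((k:ℝ)+1) = -Real.log (1 - x j) := by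
    intro j
    exact (Real.hasSum_pow_div_log_of_abs_lt_one (x := x j)
      (by rw [abs_of_nonneg (hx0 j)]; exact hx1 j)).tsum_eq
  have hsum1 : μ * ∑ j, ∑' k : ℕ, (x j) ^ (k + 1) / ((k:ℝ)+1) = -Real.log P := by
    rw [Finset.sum_congr rfl fun j _ => hlog1 j, hPdef,
      Real.log_prod (fun j _ => (hPj j).ne')]
    rw [Finset.sum_congr rfl fun j (_ : j ∈ Finset.univ) => Real.log_rpow (hxj1 j) μ]
    rw [Finset.mul_sum]
    rw [← Finset.sum_neg_distrib]
    exact Finset.sum_congr rfl fun j _ => by ring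
  refine ⟨hsummT, ?_⟩
  rw [htsum, hsum1]
  have hPq : P - t = P * (1 - q) := by
    rw [hqdef, mul_sub, mul_one, mul_div_cancel₀ _ hP.ne']
  rw [hPq, Real.log_mul hP.ne' (by linarith : (1:ℝ) - q ≠ 0)]
  ring

theorem stmt10 (r : ℕ) (μ : ℝ) (hμ : 0 < μ) (z : Fin r → ℂ) (w : ℂ)
    (hz : ∀ j, ‖z j‖ < 1)
    (hw : ‖w‖ ^ 2 < ∏ j, (1 - ‖z j‖ ^ 2) ^ μ) :
    Summable (fun p : (Fin r → ℕ) × ℕ =>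
      (1 / (p.2 + 1 : ℝ)) * (∏ j, genBinom (μ * (p.2 + 1)) (p.1 j)) *
        (∏ j, ‖z j‖ ^ (2 * p.1 j)) * ‖w‖ ^ (2 * (p.2 + 1))) ∧
    μ * ∑ j, ∑' k : ℕ, ‖z j‖ ^ (2 * (k + 1)) / (k + 1)
      + ∑' p : (Fin r → ℕ) × ℕ,
          (1 / (p.2 + 1 : ℝ)) * (∏ j, genBinom (μ * (p.2 + 1)) (p.1 j)) *
            (∏ j, ‖z j‖ ^ (2 * p.1 j)) * ‖w‖ ^ (2 * (p.2 + 1))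
      = -Real.log ((∏ j, (1 - ‖z j‖ ^ 2) ^ μ) - ‖w‖ ^ 2) := by
  have hx0 : ∀ j, 0 ≤ ‖z j‖ ^ 2 := fun j => sq_nonneg _
  have hx1 : ∀ j, ‖z j‖ ^ 2 < 1 := fun j =>
    pow_lt_one₀ (norm_nonneg _) (hz j) two_ne_zero
  have h := main_aux r μ hμ (fun j => ‖z j‖ ^ 2) (‖w‖ ^ 2)
    hx0 hx1 (sq_nonneg _) hw
  simpa only [pow_mul] using h
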